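/- Let 𝒞 be a C*-algebra, let 𝒜 and ℬ be finite-dimensional *-subalgebras of 𝒞, and let Ω be a nonempty locally compact Hausdorff space. Then d_KK(𝒜, ℬ) = d_KK(C₀(Ω, 𝒜), C₀(Ω, ℬ)), where C₀(Ω, 𝒜) and C₀(Ω, ℬ) are viewed as C*-subalgebras of C₀(Ω, 𝒞). -/

import Mathlib

/-!
For `d_KK(𝒜, ℬ) ≤ d_KK(C₀(Ω, 𝒜), C₀(Ω, ℬ))`, take `x` in the unit ball of `𝒜` and a Urysohn
bump `u` with `u t₀ = 1`: every `g` in the unit ball of `C₀(Ω, ℬ)` satisfies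
`‖u • x - g‖ ≥ ‖x - g t₀‖ ≥ d(x, B₁(ℬ))`.

Conversely, let `f` lie in the unit ball of `C₀(Ω, 𝒜)` and let `s` bound `d(x, B₁(ℬ))` on `B₁(𝒜)`.
Since `B₁(ℬ)` is convex and `B₁(𝒜)` is metric, hence paracompact, a partition of unity gives a
continuous `φ : B₁(𝒜) → B₁(ℬ)` with `‖x - φ x‖ < s + δ`. Damping it near `0`,
`g t = min 1 (‖f t‖ / δ) • φ (f t)` vanishes at infinity, stays in `B₁(ℬ)` because `0 ∈ B₁(ℬ)`,
and is within `s + 2δ` of `f`.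
-/

open Metric
open scoped ZeroAtInfty

/-- The Kadison–Kastler distance between two subsets of a normed space: the Hausdorff-type
distance between their closed unit balls. -/
noncomputable def dKK {X : Type*} [NormedAddCommGroup X] (A B : Set X) : ℝ :=
  max (⨆ x : ↥(A ∩ closedBall (0 : X) 1), infDist (x : X) (B ∩ closedBall (0 : X) 1))
      (⨆ y : ↥(B ∩ closedBall (0 : X) 1), infDist (y : X) (A ∩ closedBall (0 : X) 1))

/-- `C₀(Ω, 𝒜)` viewed as a subset of `C₀(Ω, 𝒞)`: the continuous functions vanishing at infinity
with values in `𝒜`. -/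
def c0ValIn {Ω C : Type*} [TopologicalSpace Ω] [NormedAddCommGroup C]
    (A : Set C) : Set C₀(Ω, C) :=
  {f | ∀ t, f t ∈ A}

open Filter Topology Set

namespace ZeroAtInftyContinuousMap

variable {Ω E : Type*} [TopologicalSpace Ω] [NormedAddCommGroup E]

theorem dist_le {f g : C₀(Ω, E)} {r : ℝ} (hr : 0 ≤ r) :
    dist f g ≤ r ↔ ∀ t, dist (f t) (g t) ≤ r := by
  rw [← dist_toBCF_eq_dist, BoundedContinuousFunction.dist_le hr]
  rfl

theorem dist_apply_le_dist (f g : C₀(Ω, E)) (t : Ω) : dist (f t) (g t) ≤ dist f g :=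
  (dist_le dist_nonneg).1 le_rfl t

theorem norm_apply_le (f : C₀(Ω, E)) (t : Ω) : ‖f t‖ ≤ ‖f‖ := by
  simpa using dist_apply_le_dist f 0 t

end ZeroAtInftyContinuousMap

open ZeroAtInftyContinuousMap

section

variable {Ω E : Type*} [TopologicalSpace Ω] [NormedAddCommGroup E]

theorem c0ValIn_inter_closedBall (A : Set E) :
    c0ValIn (Ω := Ω) A ∩ closedBall 0 1 = c0ValIn (A ∩ closedBall 0 1) := by
  ext f
  simp only [c0ValIn, mem_inter_iff, mem_ofPred_eq, mem_closedBall, dist_le zero_le_one,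
    forall_and, coe_zero, Pi.zero_apply]

variable [NormedSpace ℝ E]

theorem exists_continuousMap_mem_dist_lt {K L : Set E} (hL : Convex ℝ L) (hne : L.Nonempty)
    {s : ℝ} (hs : ∀ x ∈ K, infDist x L < s) :
    ∃ φ : C(K, E), ∀ x : K, φ x ∈ L ∧ dist (x : E) (φ x) < s := by
  obtain ⟨φ, hφ⟩ := exists_continuous_forall_mem_convex_of_local_const
    (t := fun x : K => L ∩ ball (x : E) s) (fun x => hL.inter (convex_ball _ _)) fun x => by
      obtain ⟨c, hcL, hxc⟩ := (infDist_lt_iff hne).1 (hs x x.2)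
      have hnear : ∀ᶠ y : K in 𝓝 x, dist (y : E) c < s :=
        (continuous_subtype_val.dist continuous_const).continuousAt.eventually_lt
          continuousAt_const hxc
      exact ⟨c, hnear.mono fun y hy => ⟨hcL, mem_ball'.2 hy⟩⟩
  exact ⟨φ, fun x => ⟨(hφ x).1, mem_ball'.1 (hφ x).2⟩⟩

theorem dist_min_one_div_smul_le {δ : ℝ} (hδ : 0 < δ) (x y : E) :
    dist x (min 1 (‖x‖ / δ) • y) ≤ δ + dist x y := by
  set r := min 1 (‖x‖ / δ)
  have hr₀ : 0 ≤ r := le_min zero_le_one (by positivity)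
  have hr₁ : r ≤ 1 := min_le_left _ _
  have hcut : (1 - r) * ‖x‖ ≤ δ := by
    rcases le_total ‖x‖ δ with hx | hx
    · nlinarith [norm_nonneg x]
    · have : r = 1 := min_eq_left ((one_le_div hδ).2 hx)
      simp [this, hδ.le]
  calc dist x (r • y) = ‖(1 - r) • x + r • (x - y)‖ := by
        rw [dist_eq_norm]; congr 1; module
    _ ≤ (1 - r) * ‖x‖ + r * dist x y := by
        refine (norm_add_le _ _).trans ?_
        rw [norm_smul, norm_smul, Real.norm_of_nonneg (sub_nonneg.2 hr₁),
          Real.norm_of_nonneg hr₀, dist_eq_norm]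
    _ ≤ δ + dist x y := by
        gcongr
        exact mul_le_of_le_one_left dist_nonneg hr₁

theorem infDist_c0ValIn_le {K L : Set E} (hL : Convex ℝ L) (hL₀ : (0 : E) ∈ L) {s : ℝ}
    (hs₀ : 0 ≤ s) (hs : ∀ x ∈ K, infDist x L ≤ s) {f : C₀(Ω, E)} (hf : f ∈ c0ValIn K) :
    infDist f (c0ValIn L) ≤ s := by
  refine le_of_forall_pos_le_add fun ε hε => ?_
  set δ := ε / 2
  have hδ : 0 < δ := half_pos hε
  obtain ⟨φ, hφ⟩ := exists_continuousMap_mem_dist_lt hL ⟨0, hL₀⟩ (s := s + δ)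
    fun x hx => (hs x hx).trans_lt (lt_add_of_pos_right s hδ)
  let fK : C(Ω, K) := ⟨fun t => ⟨f t, hf t⟩, (map_continuous f).subtype_mk _⟩
  let r : Ω → ℝ := fun t => min 1 (‖f t‖ / δ)
  have hr₀ : ∀ t, 0 ≤ r t := fun t => le_min zero_le_one (by positivity)
  have hφ_le : ∀ t, ‖φ (fK t)‖ ≤ ‖f‖ + (s + δ) := fun t =>
    calc ‖φ (fK t)‖ ≤ ‖f t‖ + dist (f t) (φ (fK t)) := by
          rw [dist_eq_norm]; exact norm_le_norm_add_norm_sub _ _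
      _ ≤ ‖f‖ + (s + δ) := add_le_add (norm_apply_le f t) (hφ (fK t)).2.le
  have hg_le : ∀ t, ‖r t • φ (fK t)‖ ≤ ‖f t‖ / δ * (‖f‖ + (s + δ)) := fun t => by
    rw [norm_smul, Real.norm_of_nonneg (hr₀ t)]
    exact mul_le_mul (min_le_right _ _) (hφ_le t) (norm_nonneg _) (by positivity)
  have hg_tendsto : Tendsto (fun t => r t • φ (fK t)) (cocompact Ω) (𝓝 0) := by
    refine squeeze_zero_norm hg_le ?_
    simpa using ((zero_at_infty f).norm.div_const δ).mul_const (‖f‖ + (s + δ))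
  let g : C₀(Ω, E) := ⟨⟨fun t => r t • φ (fK t), by fun_prop⟩, hg_tendsto⟩
  have hgL : g ∈ c0ValIn L := fun t =>
    (hL.starConvex hL₀).smul_mem (hφ _).1 (hr₀ t) (min_le_left _ _)
  calc infDist f (c0ValIn L) ≤ dist f g := infDist_le_dist_of_mem hgL
    _ ≤ δ + (s + δ) := (dist_le (by positivity)).2 fun t =>
        (dist_min_one_div_smul_le hδ _ _).trans (add_le_add le_rfl (hφ (fK t)).2.le)
    _ = s + ε := by ring

theorem exists_mem_c0ValIn_infDist_le [RegularSpace Ω] [LocallyCompactSpace Ω] (t₀ : Ω)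
    {K L : Set E} (hK : StarConvex ℝ 0 K) (hL₀ : (0 : E) ∈ L) {x : E} (hx : x ∈ K) :
    ∃ e ∈ c0ValIn (Ω := Ω) K, infDist x L ≤ infDist e (c0ValIn L) := by
  obtain ⟨u, hu_one, -, hu_supp, hu_mem⟩ :=
    exists_continuous_one_zero_of_isCompact isCompact_singleton isClosed_empty
      (disjoint_empty {t₀})
  let e : C₀(Ω, E) := ⟨⟨fun t => u t • x, by fun_prop⟩,
    by simpa using hu_supp.is_zero_at_infty.smul_const x⟩
  have he_t₀ : e t₀ = x := by
    change u t₀ • x = x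
    rw [hu_one rfl, Pi.one_apply, one_smul]
  refine ⟨e, fun t => hK.smul_mem hx (hu_mem t).1 (hu_mem t).2, ?_⟩
  refine (le_infDist (s := c0ValIn L) ⟨0, fun _ => hL₀⟩).2 fun g hg => ?_
  calc infDist x L ≤ dist (e t₀) (g t₀) := he_t₀ ▸ infDist_le_dist_of_mem (hg t₀)
    _ ≤ dist e g := dist_apply_le_dist e g t₀

theorem iSup_infDist_c0ValIn_eq [Nonempty Ω] [RegularSpace Ω] [LocallyCompactSpace Ω]
    {K L : Set E} (hK : StarConvex ℝ 0 K) (hK_bdd : Bornology.IsBounded K) (hL : Convex ℝ L)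
    (hL₀ : (0 : E) ∈ L) :
    ⨆ f : ↥(c0ValIn (Ω := Ω) K), infDist (f : C₀(Ω, E)) (c0ValIn L) =
      ⨆ x : ↥K, infDist (x : E) L := by
  set s := ⨆ x : ↥K, infDist (x : E) L
  obtain ⟨R, hR⟩ := hK_bdd.exists_norm_le
  have hbdd : BddAbove (range fun x : ↥K => infDist (x : E) L) :=
    ⟨R, forall_mem_range.2 fun x =>
      (infDist_le_dist_of_mem hL₀).trans ((dist_zero_right (x : E)).trans_le (hR x x.2))⟩
  have hs₀ : 0 ≤ s := Real.iSup_nonneg fun _ => infDist_nonneg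
  have hle : ∀ f : ↥(c0ValIn (Ω := Ω) K), infDist (f : C₀(Ω, E)) (c0ValIn L) ≤ s :=
    fun f => infDist_c0ValIn_le hL hL₀ hs₀ (fun x hx => le_ciSup hbdd ⟨x, hx⟩) f.2
  refine le_antisymm (Real.iSup_le hle hs₀)
    (Real.iSup_le (fun x => ?_) (Real.iSup_nonneg fun _ => infDist_nonneg))
  obtain ⟨e, he, hxe⟩ := exists_mem_c0ValIn_infDist_le (Classical.arbitrary Ω) hK hL₀ x.2
  exact hxe.trans (le_ciSup ⟨s, forall_mem_range.2 hle⟩ ⟨e, he⟩)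

end

theorem NonUnitalStarSubalgebra.convex {C : Type*} [NonUnitalNormedRing C] [NormedSpace ℂ C]
    [Star C] (A : NonUnitalStarSubalgebra ℂ C) : Convex ℝ (A : Set C) :=
  (A.toNonUnitalSubalgebra.toSubmodule.restrictScalars ℝ).convex

theorem dKK_eq_dKK_c0_of_finiteDimensional_general
    {C : Type*} [NonUnitalNormedRing C] [StarRing C] [NormedSpace ℂ C]
    (Ω : Type*) [TopologicalSpace Ω] [LocallyCompactSpace Ω] [T2Space Ω] [Nonempty Ω]
    (A B : NonUnitalStarSubalgebra ℂ C) :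
    dKK (A : Set C) (B : Set C) =
      dKK (c0ValIn (Ω := Ω) (A : Set C)) (c0ValIn (Ω := Ω) (B : Set C)) := by
  have hconvex (S : NonUnitalStarSubalgebra ℂ C) : Convex ℝ ((S : Set C) ∩ closedBall 0 1) :=
    S.convex.inter (convex_closedBall 0 1)
  have hzero (S : NonUnitalStarSubalgebra ℂ C) : (0 : C) ∈ (S : Set C) ∩ closedBall 0 1 :=
    ⟨zero_mem S, mem_closedBall_self zero_le_one⟩
  have hbdd (S : NonUnitalStarSubalgebra ℂ C) :
      Bornology.IsBounded ((S : Set C) ∩ closedBall 0 1) :=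
    isBounded_closedBall.subset inter_subset_right
  rw [dKK, dKK, c0ValIn_inter_closedBall, c0ValIn_inter_closedBall,
    iSup_infDist_c0ValIn_eq ((hconvex A).starConvex (hzero A)) (hbdd A) (hconvex B) (hzero B),
    iSup_infDist_c0ValIn_eq ((hconvex B).starConvex (hzero B)) (hbdd B) (hconvex A) (hzero A)]

/-- For finite-dimensional `*`-subalgebras `𝒜, ℬ` of a C*-algebra `𝒞` and a nonempty locally
compact Hausdorff space `Ω`, `d_KK(𝒜, ℬ) = d_KK(C₀(Ω, 𝒜), C₀(Ω, ℬ))`. -/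
theorem dKK_eq_dKK_c0_of_finiteDimensional
    {C : Type*} [NonUnitalNormedRing C] [StarRing C] [CStarRing C] [NormedSpace ℂ C]
    [IsScalarTower ℂ C C] [SMulCommClass ℂ C C] [StarModule ℂ C] [CompleteSpace C]
    (Ω : Type*) [TopologicalSpace Ω] [LocallyCompactSpace Ω] [T2Space Ω] [Nonempty Ω]
    (A B : NonUnitalStarSubalgebra ℂ C)
    [FiniteDimensional ℂ A] [FiniteDimensional ℂ B] :
    dKK (A : Set C) (B : Set C) =
      dKK (c0ValIn (Ω := Ω) (A : Set C)) (c0ValIn (Ω := Ω) (B : Set C)) :=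
  dKK_eq_dKK_c0_of_finiteDimensional_general Ω A B
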